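/- arXiv:2403.00189 — 5 statements merged into one kernel-verified Lean document; each statement's English description precedes it below -/
import Mathlib

section
/- Let λ > 0 and d > 0 be reals and let θ, θ' ∈ ℝ. For each N ∈ ℕ define the far-field steering vector a_N(θ) ∈ ℂ^N by (a_N(θ))_i = exp(−𝑖·(2π/λ)·i·d·cos θ) for i = 0, …, N−1, and let h_N = c·a_N(θ) and h'_N = c'·a_N(θ') with positive real amplitudes c, c'. If (d/λ)·(cos θ − cos θ') is not an integer, then the normalized inner product |⟨h_N, h'_N⟩| / (‖h_N‖·‖h'_N‖) tends to 0 as N → ∞, where ⟨x,y⟩ = ∑_i conj(x_i)·y_i; moreover, if θ = θ', then |⟨h_N, h'_N⟩| / (‖h_N‖·‖h'_N‖) = 1 for every N ≥ 1. -/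
open Filter Finset
/-- Far-field uniform-linear-array steering vector: entry `i` is
`exp(−I·(2π/λ)·i·d·cos θ)`. -/
noncomputable def steer (lam d θ : ℝ) (N : ℕ) : EuclideanSpace ℂ (Fin N) :=
  WithLp.toLp 2 fun (i : Fin N) => Complex.exp (-Complex.I * ((2 * Real.pi / lam) * (i : ℕ) * d * Real.cos θ))

lemma steer_norm (lam d θ : ℝ) (N : ℕ) : ‖steer lam d θ N‖ = Real.sqrt N := by
  rw [EuclideanSpace.norm_eq]
  have h : ∀ i : Fin N, ‖steer lam d θ N i‖ = 1 := fun i => by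
    simp [steer, Complex.norm_exp]
  simp [h]

lemma steer_inner (lam d θ θ' : ℝ) (N : ℕ) :
    (inner ℂ (steer lam d θ N) (steer lam d θ' N) : ℂ) =
      ∑ i ∈ Finset.range N,
        (Complex.exp (Complex.I *
          ((((2 * Real.pi / lam) * d * (Real.cos θ - Real.cos θ') : ℝ)) : ℂ)))^i := by
  rw [PiLp.inner_apply]
  rw [← Fin.sum_univ_eq_sum_range]
  congr 1
  ext i
  simp only [steer, RCLike.inner_apply, ← Complex.exp_conj, ← Complex.exp_nat_mul,
    ← Complex.exp_add, map_mul, map_neg, Complex.conj_I, Complex.conj_ofReal,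
    map_natCast, map_ofNat, map_div₀]
  congr 1
  push_cast
  ring

theorem stmt0 (lam d c c' θ θ' : ℝ) (hlam : 0 < lam) (hd : 0 < d)
    (hc : 0 < c) (hc' : 0 < c') :
    ((∀ m : ℤ, (d / lam) * (Real.cos θ - Real.cos θ') ≠ (m : ℝ)) →
      Tendsto (fun N : ℕ =>
          ‖(inner ℂ ((c : ℂ) • steer lam d θ N) ((c' : ℂ) • steer lam d θ' N) : ℂ)‖ /
            (‖(c : ℂ) • steer lam d θ N‖ * ‖(c' : ℂ) • steer lam d θ' N‖))
        atTop (nhds 0)) ∧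
    (θ = θ' → ∀ N : ℕ, 1 ≤ N →
      ‖(inner ℂ ((c : ℂ) • steer lam d θ N) ((c' : ℂ) • steer lam d θ' N) : ℂ)‖ /
          (‖(c : ℂ) • steer lam d θ N‖ * ‖(c' : ℂ) • steer lam d θ' N‖) = 1) := by
  set ω : ℝ := (2 * Real.pi / lam) * d * (Real.cos θ - Real.cos θ') with hω
  set z : ℂ := Complex.exp (Complex.I * (ω : ℂ)) with hzdef
  have hcc' : (0:ℝ) < c * c' := mul_pos hc hc'
  have hnum : ∀ N : ℕ,
      ‖(inner ℂ ((c : ℂ) • steer lam d θ N) ((c' : ℂ) • steer lam d θ' N) : ℂ)‖ =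
        c * c' * ‖∑ i ∈ Finset.range N, z ^ i‖ := by
    intro N
    rw [inner_smul_left, inner_smul_right, steer_inner, norm_mul, norm_mul,
      RCLike.norm_conj]
    simp only [Complex.norm_real, Real.norm_eq_abs, abs_of_pos hc, abs_of_pos hc']
    ring
  have hden : ∀ N : ℕ,
      ‖(c : ℂ) • steer lam d θ N‖ * ‖(c' : ℂ) • steer lam d θ' N‖ = c * c' * N := by
    intro N
    rw [norm_smul, norm_smul, steer_norm, steer_norm]
    have h2 : Real.sqrt N * Real.sqrt N = N := Real.mul_self_sqrt (Nat.cast_nonneg N)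
    simp only [Complex.norm_real, Real.norm_eq_abs, abs_of_pos hc, abs_of_pos hc']
    linear_combination c * c' * h2
  have hratio : ∀ N : ℕ,
      ‖(inner ℂ ((c : ℂ) • steer lam d θ N) ((c' : ℂ) • steer lam d θ' N) : ℂ)‖ /
          (‖(c : ℂ) • steer lam d θ N‖ * ‖(c' : ℂ) • steer lam d θ' N‖) =
        ‖∑ i ∈ Finset.range N, z ^ i‖ / N := by
    intro N
    rw [hnum, hden, mul_div_mul_left _ _ (ne_of_gt hcc')]
  constructor
  · intro hint
    have hωne : ∀ m : ℤ, ω ≠ 2 * Real.pi * m := by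
      intro m h
      apply hint m
      have hπ : (0:ℝ) < Real.pi := Real.pi_pos
      rw [hω] at h
      field_simp at h ⊢
      nlinarith [h]
    have hz1 : z ≠ 1 := by
      intro h
      rw [hzdef, Complex.exp_eq_one_iff] at h
      obtain ⟨n, hn⟩ := h
      apply hωne n
      have hI : (Complex.I) ≠ 0 := Complex.I_ne_zero
      rw [mul_comm] at hn
      have h2 : (ω : ℂ) = (n : ℂ) * (2 * Real.pi) := by
        have := hn
        rw [show (n : ℂ) * (2 * ↑Real.pi * Complex.I) = ((n : ℂ) * (2 * ↑Real.pi)) * Complex.I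
          by ring] at this
        exact mul_right_cancel₀ hI this
      have h3 : ω = (n : ℝ) * (2 * Real.pi) := by exact_mod_cast h2
      rw [h3]; ring
    have hznorm : ‖z‖ = 1 := by
      rw [hzdef]
      simp [Complex.norm_exp]
    have hz1' : (0:ℝ) < ‖z - 1‖ := by
      simp [norm_pos_iff, sub_ne_zero.mpr hz1]
    have hbound : ∀ N : ℕ, ‖∑ i ∈ Finset.range N, z ^ i‖ ≤ 2 / ‖z - 1‖ := by
      intro N
      rw [geom_sum_eq hz1, norm_div]
      gcongr
      calc ‖z ^ N - 1‖ ≤ ‖z ^ N‖ + ‖(1:ℂ)‖ := norm_sub_le _ _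
        _ = 2 := by rw [norm_pow, hznorm]; norm_num
    apply squeeze_zero (fun N => by positivity)
      (g := fun N : ℕ => (2 / ‖z - 1‖) / N)
    · intro N
      rw [hratio]
      rcases Nat.eq_zero_or_pos N with h0 | hpos
      · simp [h0]
      · have : (0:ℝ) < N := by exact_mod_cast hpos
        gcongr
        exact hbound N
    · exact tendsto_const_div_atTop_nhds_zero_nat _
  · intro hθ N hN
    subst hθ
    have hω0 : ω = 0 := by rw [hω]; ring
    have hz1 : z = 1 := by rw [hzdef, hω0]; simp
    rw [hratio, hz1]
    have hN' : (0:ℝ) < N := by exact_mod_cast hN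
    simp [div_self (ne_of_gt hN')]
end

section
/- Let (Ω, 𝔉, ℙ) be a probability space and let (X_i)_{i∈ℕ} and (Y_i)_{i∈ℕ} be ℂ-valued random variables such that the combined family {X_i} ∪ {Y_i} is independent, each X_i is identically distributed with X_0 and each Y_i with Y_0, X_0 and Y_0 lie in L², 𝔼[X_0] = 0, 𝔼[Y_0] = 0, 𝔼[|X_0|²] = 1 and 𝔼[|Y_0|²] = 1. Then almost surely the normalized inner product |∑_{i<N} conj(X_i)·Y_i| / ( (∑_{i<N} |X_i|²)^{1/2} · (∑_{i<N} |Y_i|²)^{1/2} ) tends to 0 as N → ∞. -/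
open Filter Finset MeasureTheory ProbabilityTheory

lemma my_iIndepFun_ae_eq {Ω ι : Type*} [MeasurableSpace Ω] {μ : Measure Ω}
    {β : ι → Type*} [m : ∀ i, MeasurableSpace (β i)] {f g : ∀ i, Ω → β i}
    (h : iIndepFun f μ) (hfg : ∀ i, f i =ᵐ[μ] g i) : iIndepFun g μ := by
  rw [iIndepFun_iff_measure_inter_preimage_eq_mul] at h ⊢
  intro S sets hsets
  have hpre : ∀ i : ι, f i ⁻¹' sets i =ᵐ[μ] g i ⁻¹' sets i :=
    fun i => (hfg i).fun_comp (sets i)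
  have h1 : (⋂ i ∈ S, f i ⁻¹' sets i) =ᵐ[μ] (⋂ i ∈ S, g i ⁻¹' sets i) :=
    EventuallyEq.countable_bInter S.countable_toSet (fun i _ => hpre i)
  rw [← measure_congr h1, h S hsets]
  exact Finset.prod_congr rfl fun i _ => measure_congr (hpre i)

lemma my_indep_integral_mul_complex {Ω : Type*} [MeasurableSpace Ω] {μ : Measure Ω}
    {f g : Ω → ℂ} (h : IndepFun f g μ) (hf : Integrable f μ) (hg : Integrable g μ) :
    ∫ ω, f ω * g ω ∂μ = (∫ ω, f ω ∂μ) * ∫ ω, g ω ∂μ := by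
  have hfre : Integrable (fun ω => (f ω).re) μ := by simpa using hf.re
  have hfim : Integrable (fun ω => (f ω).im) μ := by simpa using hf.im
  have hgre : Integrable (fun ω => (g ω).re) μ := by simpa using hg.re
  have hgim : Integrable (fun ω => (g ω).im) μ := by simpa using hg.im
  have hrr : IndepFun (fun ω => (f ω).re) (fun ω => (g ω).re) μ :=
    h.comp Complex.measurable_re Complex.measurable_re
  have hri : IndepFun (fun ω => (f ω).re) (fun ω => (g ω).im) μ :=
    h.comp Complex.measurable_re Complex.measurable_im
  have hir : IndepFun (fun ω => (f ω).im) (fun ω => (g ω).re) μ :=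
    h.comp Complex.measurable_im Complex.measurable_re
  have hii : IndepFun (fun ω => (f ω).im) (fun ω => (g ω).im) μ :=
    h.comp Complex.measurable_im Complex.measurable_im
  have irr : Integrable (fun ω => (f ω).re * (g ω).re) μ := hrr.integrable_mul hfre hgre
  have iri : Integrable (fun ω => (f ω).re * (g ω).im) μ := hri.integrable_mul hfre hgim
  have iir : Integrable (fun ω => (f ω).im * (g ω).re) μ := hir.integrable_mul hfim hgre
  have iii : Integrable (fun ω => (f ω).im * (g ω).im) μ := hii.integrable_mul hfim hgim
  have hprod : Integrable (fun ω => f ω * g ω) μ := h.integrable_mul hf hg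
  have hfr : (∫ ω, f ω ∂μ).re = ∫ ω, (f ω).re ∂μ := by
    simpa using (integral_re hf).symm
  have hfi : (∫ ω, f ω ∂μ).im = ∫ ω, (f ω).im ∂μ := by
    simpa using (integral_im hf).symm
  have hgr : (∫ ω, g ω ∂μ).re = ∫ ω, (g ω).re ∂μ := by
    simpa using (integral_re hg).symm
  have hgi : (∫ ω, g ω ∂μ).im = ∫ ω, (g ω).im ∂μ := by
    simpa using (integral_im hg).symm
  apply Complex.ext
  · have : (∫ ω, f ω * g ω ∂μ).re = ∫ ω, (f ω * g ω).re ∂μ := by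
      simpa using (integral_re hprod).symm
    rw [this, Complex.mul_re, hfr, hfi, hgr, hgi]
    simp only [Complex.mul_re]
    rw [integral_sub irr iii, hrr.integral_fun_mul_eq_mul_integral hfre.aestronglyMeasurable hgre.aestronglyMeasurable,
      hii.integral_fun_mul_eq_mul_integral hfim.aestronglyMeasurable hgim.aestronglyMeasurable]
  · have : (∫ ω, f ω * g ω ∂μ).im = ∫ ω, (f ω * g ω).im ∂μ := by
      simpa using (integral_im hprod).symm
    rw [this, Complex.mul_im, hfr, hfi, hgr, hgi]
    simp only [Complex.mul_im]
    rw [integral_add iri iir, hri.integral_fun_mul_eq_mul_integral hfre.aestronglyMeasurable hgim.aestronglyMeasurable,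
      hir.integral_fun_mul_eq_mul_integral hfim.aestronglyMeasurable hgre.aestronglyMeasurable]

theorem stmt2 {Ω : Type*} [MeasurableSpace Ω] (μ : Measure Ω) [IsProbabilityMeasure μ]
    (X Y : ℕ → Ω → ℂ)
    (hindep : iIndepFun (Sum.elim X Y) μ)
    (hXid : ∀ i, IdentDistrib (X i) (X 0) μ μ)
    (hYid : ∀ i, IdentDistrib (Y i) (Y 0) μ μ)
    (hX2 : MemLp (X 0) 2 μ) (hY2 : MemLp (Y 0) 2 μ)
    (hXmean : ∫ ω, X 0 ω ∂μ = 0) (hYmean : ∫ ω, Y 0 ω ∂μ = 0)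
    (hXvar : ∫ ω, ‖X 0 ω‖ ^ 2 ∂μ = 1) (hYvar : ∫ ω, ‖Y 0 ω‖ ^ 2 ∂μ = 1) :
    ∀ᵐ ω ∂μ, Tendsto (fun N : ℕ =>
        ‖∑ i ∈ Finset.range N, (starRingEnd ℂ) (X i ω) * Y i ω‖ /
          (Real.sqrt (∑ i ∈ Finset.range N, ‖X i ω‖ ^ 2) *
            Real.sqrt (∑ i ∈ Finset.range N, ‖Y i ω‖ ^ 2)))
      atTop (nhds 0) := by
  classical
  -- measurable modifications
  set X' : ℕ → Ω → ℂ := fun i => ((hXid i).aemeasurable_fst).mk (X i) with hX'def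
  set Y' : ℕ → Ω → ℂ := fun i => ((hYid i).aemeasurable_fst).mk (Y i) with hY'def
  have hX'meas : ∀ i, Measurable (X' i) := fun i => AEMeasurable.measurable_mk _
  have hY'meas : ∀ i, Measurable (Y' i) := fun i => AEMeasurable.measurable_mk _
  have hXX' : ∀ i, X i =ᵐ[μ] X' i := fun i => AEMeasurable.ae_eq_mk _
  have hYY' : ∀ i, Y i =ᵐ[μ] Y' i := fun i => AEMeasurable.ae_eq_mk _
  have hindep' : iIndepFun (Sum.elim X' Y') μ :=
    my_iIndepFun_ae_eq hindep (fun s => by cases s with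
      | inl i => exact hXX' i
      | inr i => exact hYY' i)
  have hmeasAll : ∀ s : ℕ ⊕ ℕ, Measurable (Sum.elim X' Y' s) := fun s => by
    cases s with
    | inl i => exact hX'meas i
    | inr i => exact hY'meas i
  have hX'id : ∀ i, IdentDistrib (X' i) (X' 0) μ μ := fun i =>
    ((IdentDistrib.of_ae_eq (hX'meas i).aemeasurable (hXX' i).symm).trans (hXid i)).trans
      (IdentDistrib.of_ae_eq (hXid 0).aemeasurable_fst (hXX' 0))
  have hY'id : ∀ i, IdentDistrib (Y' i) (Y' 0) μ μ := fun i =>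
    ((IdentDistrib.of_ae_eq (hY'meas i).aemeasurable (hYY' i).symm).trans (hYid i)).trans
      (IdentDistrib.of_ae_eq (hYid 0).aemeasurable_fst (hYY' 0))
  have hX'2 : MemLp (X' 0) 2 μ := hX2.ae_eq (hXX' 0)
  have hY'2 : MemLp (Y' 0) 2 μ := hY2.ae_eq (hYY' 0)
  have hX'mean : ∫ ω, X' 0 ω ∂μ = 0 := by
    rw [← integral_congr_ae (hXX' 0)]; exact hXmean
  have hY'mean : ∫ ω, Y' 0 ω ∂μ = 0 := by
    rw [← integral_congr_ae (hYY' 0)]; exact hYmean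
  have hX'var : ∫ ω, ‖X' 0 ω‖ ^ 2 ∂μ = 1 := by
    have h2 : (fun ω => ‖X 0 ω‖ ^ 2) =ᵐ[μ] fun ω => ‖X' 0 ω‖ ^ 2 :=
      (hXX' 0).mono fun ω h => by simp [h]
    rw [← integral_congr_ae h2]; exact hXvar
  have hY'var : ∫ ω, ‖Y' 0 ω‖ ^ 2 ∂μ = 1 := by
    have h2 : (fun ω => ‖Y 0 ω‖ ^ 2) =ᵐ[μ] fun ω => ‖Y' 0 ω‖ ^ 2 :=
      (hYY' 0).mono fun ω h => by simp [h]
    rw [← integral_congr_ae h2]; exact hYvar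
  have hX'int : Integrable (X' 0) μ := hX'2.integrable one_le_two
  have hY'int : Integrable (Y' 0) μ := hY'2.integrable one_le_two
  -- the products Z i
  set Z : ℕ → Ω → ℂ := fun i ω => (starRingEnd ℂ) (X' i ω) * Y' i ω with hZdef
  have hconj_meas : Measurable fun z : ℂ => (starRingEnd ℂ) z := continuous_star.measurable
  have hXYindep : ∀ i, IndepFun (X' i) (Y' i) μ := fun i =>
    hindep'.indepFun (show (Sum.inl i : ℕ ⊕ ℕ) ≠ Sum.inr i by simp)
  have hZ0indep : IndepFun (fun ω => (starRingEnd ℂ) (X' 0 ω)) (Y' 0) μ :=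
    (hXYindep 0).comp hconj_meas measurable_id
  have hconjint : Integrable (fun ω => (starRingEnd ℂ) (X' 0 ω)) μ :=
    hX'int.mono (hconj_meas.comp (hX'meas 0)).aestronglyMeasurable
      (Filter.Eventually.of_forall fun ω => by simp)
  have hZint : Integrable (Z 0) μ := hZ0indep.integrable_mul hconjint hY'int
  have hZmean : ∫ ω, Z 0 ω ∂μ = 0 := by
    rw [hZdef]
    rw [my_indep_integral_mul_complex hZ0indep hconjint hY'int]
    simp [hY'mean]
  -- pairwise independence of the Z i
  have φmeas : Measurable fun p : ℂ × ℂ => (starRingEnd ℂ) p.1 * p.2 :=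
    (hconj_meas.comp measurable_fst).mul measurable_snd
  have hZindep : Pairwise (Function.onFun (IndepFun · · μ) Z) := by
    intro i j hij
    have := (hindep'.indepFun_prodMk_prodMk hmeasAll (Sum.inl i) (Sum.inr i)
      (Sum.inl j) (Sum.inr j) (by simp [hij]) (by simp) (by simp) (by simp [hij]))
    exact this.comp φmeas φmeas
  -- identical distribution of the Z i
  have hpair_id : ∀ i, IdentDistrib (fun ω => (X' i ω, Y' i ω)) (fun ω => (X' 0 ω, Y' 0 ω)) μ μ := by
    intro i
    refine ⟨((hX'meas i).prodMk (hY'meas i)).aemeasurable,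
      ((hX'meas 0).prodMk (hY'meas 0)).aemeasurable, ?_⟩
    rw [(indepFun_iff_map_prod_eq_prod_map_map (hX'meas i).aemeasurable
        (hY'meas i).aemeasurable).1 (hXYindep i),
      (indepFun_iff_map_prod_eq_prod_map_map (hX'meas 0).aemeasurable
        (hY'meas 0).aemeasurable).1 (hXYindep 0),
      (hX'id i).map_eq, (hY'id i).map_eq]
  have hZid : ∀ i, IdentDistrib (Z i) (Z 0) μ μ := fun i => (hpair_id i).comp φmeas
  -- strong law for Z
  have hS := strong_law_ae Z hZint hZindep hZid
  rw [hZmean] at hS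
  -- strong law for the squared norms
  set A : ℕ → Ω → ℝ := fun i ω => ‖X' i ω‖ ^ 2 with hAdef
  set B : ℕ → Ω → ℝ := fun i ω => ‖Y' i ω‖ ^ 2 with hBdef
  have hnormsq_meas : Measurable fun z : ℂ => ‖z‖ ^ 2 := (measurable_norm.pow measurable_const)
  have hAint : Integrable (A 0) μ := by
    have := hX'2.integrable_norm_rpow (by norm_num) (by norm_num)
    simpa [ENNReal.toReal_ofNat, Real.rpow_natCast] using this
  have hBint : Integrable (B 0) μ := by
    have := hY'2.integrable_norm_rpow (by norm_num) (by norm_num)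
    simpa [ENNReal.toReal_ofNat, Real.rpow_natCast] using this
  have hAindep : Pairwise (Function.onFun (IndepFun · · μ) A) := fun i j hij =>
    (hindep'.indepFun (show (Sum.inl i : ℕ ⊕ ℕ) ≠ Sum.inl j by simp [hij])).comp
      hnormsq_meas hnormsq_meas
  have hBindep : Pairwise (Function.onFun (IndepFun · · μ) B) := fun i j hij =>
    (hindep'.indepFun (show (Sum.inr i : ℕ ⊕ ℕ) ≠ Sum.inr j by simp [hij])).comp
      hnormsq_meas hnormsq_meas
  have hAid : ∀ i, IdentDistrib (A i) (A 0) μ μ := fun i => (hX'id i).comp hnormsq_meas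
  have hBid : ∀ i, IdentDistrib (B i) (B 0) μ μ := fun i => (hY'id i).comp hnormsq_meas
  have hA := strong_law_ae A hAint hAindep hAid
  have hB := strong_law_ae B hBint hBindep hBid
  rw [hX'var] at hA
  rw [hY'var] at hB
  have hXae : ∀ᵐ ω ∂μ, ∀ i, X i ω = X' i ω := ae_all_iff.2 hXX'
  have hYae : ∀ᵐ ω ∂μ, ∀ i, Y i ω = Y' i ω := ae_all_iff.2 hYY'
  filter_upwards [hS, hA, hB, hXae, hYae] with ω hs ha hb hx hy
  simp only [hx, hy]
  -- now everything is in terms of X', Y'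
  set S : ℕ → ℂ := fun n => ∑ i ∈ Finset.range n, Z i ω with hSdef
  set a : ℕ → ℝ := fun n => ∑ i ∈ Finset.range n, A i ω with hadef
  set b : ℕ → ℝ := fun n => ∑ i ∈ Finset.range n, B i ω with hbdef
  have hsn : Tendsto (fun n : ℕ => (n : ℝ)⁻¹ * ‖S n‖) atTop (nhds 0) := by
    have := hs.norm
    simp only [norm_smul, norm_inv, Real.norm_natCast, norm_zero] at this
    exact this
  have ha' : Tendsto (fun n : ℕ => Real.sqrt ((n : ℝ)⁻¹ * a n)) atTop (nhds 1) := by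
    have h1 : Tendsto (fun n : ℕ => (n : ℝ)⁻¹ * a n) atTop (nhds 1) := by
      simpa [smul_eq_mul] using ha
    have h2 := (Real.continuous_sqrt.tendsto 1).comp h1
    rw [Real.sqrt_one] at h2
    exact h2
  have hb' : Tendsto (fun n : ℕ => Real.sqrt ((n : ℝ)⁻¹ * b n)) atTop (nhds 1) := by
    have h1 : Tendsto (fun n : ℕ => (n : ℝ)⁻¹ * b n) atTop (nhds 1) := by
      simpa [smul_eq_mul] using hb
    have h2 := (Real.continuous_sqrt.tendsto 1).comp h1
    rw [Real.sqrt_one] at h2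
    exact h2
  have hg : Tendsto (fun n : ℕ => ((n : ℝ)⁻¹ * ‖S n‖) /
      (Real.sqrt ((n : ℝ)⁻¹ * a n) * Real.sqrt ((n : ℝ)⁻¹ * b n))) atTop (nhds 0) := by
    have := hsn.div (ha'.mul hb') (by norm_num)
    simpa [Pi.div_def] using this
  have hanneg : ∀ n, 0 ≤ a n := fun n =>
    Finset.sum_nonneg fun i _ => sq_nonneg _
  have hbnneg : ∀ n, 0 ≤ b n := fun n =>
    Finset.sum_nonneg fun i _ => sq_nonneg _
  have heq : ∀ᶠ n : ℕ in atTop, ((n : ℝ)⁻¹ * ‖S n‖) /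
      (Real.sqrt ((n : ℝ)⁻¹ * a n) * Real.sqrt ((n : ℝ)⁻¹ * b n)) =
      ‖S n‖ / (Real.sqrt (a n) * Real.sqrt (b n)) := by
    filter_upwards [eventually_ge_atTop 1] with n hn
    have hn0 : (0 : ℝ) < (n : ℝ) := by exact_mod_cast hn
    rw [Real.sqrt_mul (by positivity) (a n), Real.sqrt_mul (by positivity) (b n),
      show Real.sqrt (n : ℝ)⁻¹ * Real.sqrt (a n) * (Real.sqrt (n : ℝ)⁻¹ * Real.sqrt (b n)) =
        (n : ℝ)⁻¹ * (Real.sqrt (a n) * Real.sqrt (b n)) by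
          rw [show Real.sqrt (n : ℝ)⁻¹ * Real.sqrt (a n) * (Real.sqrt (n : ℝ)⁻¹ * Real.sqrt (b n))
            = (Real.sqrt (n : ℝ)⁻¹ * Real.sqrt (n : ℝ)⁻¹) * (Real.sqrt (a n) * Real.sqrt (b n))
            by ring, Real.mul_self_sqrt (by positivity)]]
    exact mul_div_mul_left _ _ (by positivity)
  exact Tendsto.congr' heq hg
end

section
/- Let 𝔞 and 𝔟 be nonzero real numbers, and for each N ∈ ℕ set δ₁(N) = 𝔞·N and δ₂(N) = (𝔞/𝔟)·N. Then the modulus of the oscillatory integral |∫_{−1/2}^{1/2} exp( 𝑖·δ₁(N)·x·(1 + δ₂(N)·x) ) dx| tends to 0 as N → ∞. -/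
open Filter intervalIntegral

section Stmt3Aux

open Complex MeasureTheory

private lemma norm_exp_I_mul_real (r : ℝ) : ‖Complex.exp (Complex.I * r)‖ = 1 := by
  rw [show Complex.I * r = (r : ℂ) * Complex.I by ring]
  exact Complex.norm_exp_ofReal_mul_I r

private lemma cont_inner (t : ℝ) : Continuous fun u : ℝ => Complex.I * (t : ℂ) * (u : ℂ) ^ 2 :=
  continuous_const.mul (Complex.continuous_ofReal.pow 2)

private lemma cont_fres (t : ℝ) : Continuous fun u : ℝ => Complex.exp (Complex.I * t * (u : ℂ) ^ 2) :=
  Complex.continuous_exp.comp (cont_inner t)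

/-- Integration by parts bound away from the stationary point. -/
private lemma fresnel_ibp (t p q : ℝ) (ht : 0 < t) (hp : 0 < p) (hpq : p ≤ q) :
    ‖∫ u in p..q, Complex.exp (Complex.I * t * (u : ℂ) ^ 2)‖ ≤ 1 / (t * p) := by
  set f : ℝ → ℂ := fun u => Complex.exp (Complex.I * t * (u : ℂ) ^ 2) with hf
  set F : ℝ → ℂ := fun u => -Complex.I * Complex.exp (Complex.I * t * (u : ℂ) ^ 2) / (2 * t * u)
    with hF
  have hderiv : ∀ u ∈ Set.uIcc p q, HasDerivAt F
      (f u + Complex.I * f u / (2 * t * (u : ℂ) ^ 2)) u := by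
    intro u hu
    rw [Set.uIcc_of_le hpq] at hu
    have hu0 : (0 : ℝ) < u := lt_of_lt_of_le hp hu.1
    have hid : HasDerivAt (fun u : ℝ => (u : ℂ)) 1 u := by
      simpa using (hasDerivAt_id u).ofReal_comp
    have hsq : HasDerivAt (fun u : ℝ => (u : ℂ) ^ 2) (2 * (u : ℂ)) u := by
      have h2 := hid.mul hid
      simp only [pow_two]
      exact h2.congr_deriv (by ring)
    have hexp : HasDerivAt (fun u : ℝ => Complex.exp (Complex.I * t * (u : ℂ) ^ 2))
        (Complex.exp (Complex.I * t * (u : ℂ) ^ 2) * (Complex.I * t * (2 * u))) u := by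
      simpa [mul_assoc] using ((hsq.const_mul (Complex.I * t)).cexp)
    have hnum : HasDerivAt (fun u : ℝ => -Complex.I * Complex.exp (Complex.I * t * (u : ℂ) ^ 2))
        (-Complex.I * (Complex.exp (Complex.I * t * (u : ℂ) ^ 2) * (Complex.I * t * (2 * u)))) u :=
      hexp.const_mul _
    have hden : HasDerivAt (fun u : ℝ => 2 * (t : ℂ) * (u : ℂ)) (2 * t) u := by
      simpa using hid.const_mul (2 * (t : ℂ))
    have hdne : 2 * (t : ℂ) * (u : ℂ) ≠ 0 := by
      simp only [mul_ne_zero_iff]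
      exact ⟨⟨two_ne_zero, Complex.ofReal_ne_zero.2 ht.ne'⟩, Complex.ofReal_ne_zero.2 hu0.ne'⟩
    have := hnum.div hden hdne
    refine this.congr_deriv ?_
    have htne : (t : ℂ) ≠ 0 := Complex.ofReal_ne_zero.2 ht.ne'
    have hune : (u : ℂ) ≠ 0 := Complex.ofReal_ne_zero.2 hu0.ne'
    field_simp [hf]
    ring_nf
    simp only [Complex.I_sq]
    ring
  have hcontf : Continuous f := cont_fres t
  have hcontder : ContinuousOn (fun u : ℝ => Complex.I * f u / (2 * t * (u : ℂ) ^ 2))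
      (Set.uIcc p q) := by
    apply ContinuousOn.div
    · exact (continuous_const.mul hcontf).continuousOn
    · exact (continuous_const.mul (Complex.continuous_ofReal.pow 2)).continuousOn
    · intro u hu
      rw [Set.uIcc_of_le hpq] at hu
      have hu0 : (0 : ℝ) < u := lt_of_lt_of_le hp hu.1
      simp only [mul_ne_zero_iff, pow_ne_zero_iff]
      exact ⟨⟨two_ne_zero, Complex.ofReal_ne_zero.2 ht.ne'⟩,
        pow_ne_zero _ (Complex.ofReal_ne_zero.2 hu0.ne')⟩
  have hii2 : IntervalIntegrable (fun u : ℝ => Complex.I * f u / (2 * t * (u : ℂ) ^ 2))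
      volume p q := hcontder.intervalIntegrable
  have hftc : ∫ u in p..q, (f u + Complex.I * f u / (2 * t * (u : ℂ) ^ 2)) = F q - F p :=
    intervalIntegral.integral_eq_sub_of_hasDerivAt hderiv
      (hcontf.continuousOn.add hcontder).intervalIntegrable
  have hsplit : ∫ u in p..q, f u
      = (F q - F p) - ∫ u in p..q, Complex.I * f u / (2 * t * (u : ℂ) ^ 2) := by
    rw [← hftc, intervalIntegral.integral_add (hcontf.intervalIntegrable p q) hii2]
    ring
  have hnormf : ∀ u : ℝ, ‖f u‖ = 1 := by
    intro u
    show ‖Complex.exp (Complex.I * t * (u : ℂ) ^ 2)‖ = 1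
    rw [show Complex.I * (t : ℂ) * (u : ℂ) ^ 2 = Complex.I * ((t * u ^ 2 : ℝ) : ℂ) by
      push_cast; ring]
    exact norm_exp_I_mul_real _
  have hnormF : ∀ u : ℝ, 0 < u → ‖F u‖ = 1 / (2 * t * u) := by
    intro u hu
    have hFu : F u = -Complex.I * Complex.exp (Complex.I * t * (u : ℂ) ^ 2)
        / (((2 * t * u : ℝ)) : ℂ) := by
      rw [hF]; push_cast; ring
    rw [hFu, norm_div, norm_mul, norm_neg, Complex.norm_I, one_mul]
    rw [show Complex.I * (t : ℂ) * (u : ℂ) ^ 2 = Complex.I * ((t * u ^ 2 : ℝ) : ℂ) by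
      push_cast; ring]
    rw [norm_exp_I_mul_real, Complex.norm_real, Real.norm_of_nonneg (by positivity)]
  -- bound the remainder integral
  have hbound2 : ‖∫ u in p..q, Complex.I * f u / (2 * t * (u : ℂ) ^ 2)‖
      ≤ 1 / (2 * t * p) - 1 / (2 * t * q) := by
    have hcalc : ∫ u in p..q, 1 / (2 * t * u ^ 2) = 1 / (2 * t * p) - 1 / (2 * t * q) := by
      have hderiv2 : ∀ u ∈ Set.uIcc p q,
          HasDerivAt (fun u : ℝ => -(1 / (2 * t * u))) (1 / (2 * t * u ^ 2)) u := by
        intro u hu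
        rw [Set.uIcc_of_le hpq] at hu
        have hu0 : (0 : ℝ) < u := lt_of_lt_of_le hp hu.1
        have havh : HasDerivAt (fun u : ℝ => u⁻¹) (-(u ^ 2)⁻¹) u := hasDerivAt_inv hu0.ne'
        have h2 := (havh.const_mul (1 / (2 * t))).neg
        have hfun : (fun u : ℝ => -(1 / (2 * t * u))) = fun x : ℝ => -(1 / (2 * t) * x⁻¹) := by
          funext x; rw [one_div, one_div, mul_inv]
        rw [hfun]
        refine h2.congr_deriv ?_
        rw [one_div, one_div, mul_inv]; ring
      have hcont2 : ContinuousOn (fun u : ℝ => 1 / (2 * t * u ^ 2)) (Set.uIcc p q) := by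
        apply ContinuousOn.div continuousOn_const
          (continuous_const.mul (continuous_pow 2)).continuousOn
        intro u hu
        rw [Set.uIcc_of_le hpq] at hu
        have hu0 : (0 : ℝ) < u := lt_of_lt_of_le hp hu.1
        show 2 * t * u ^ 2 ≠ 0
        positivity
      rw [intervalIntegral.integral_eq_sub_of_hasDerivAt hderiv2 hcont2.intervalIntegrable]
      ring
    have hmono : 1 / (2 * t * q) ≤ 1 / (2 * t * p) := by
      apply one_div_le_one_div_of_le (by positivity)
      have : (0:ℝ) < 2 * t := by positivity
      nlinarith
    have hii3 : IntervalIntegrable (fun u : ℝ => 1 / (2 * t * u ^ 2)) volume p q := by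
      apply ContinuousOn.intervalIntegrable
      apply ContinuousOn.div continuousOn_const
        (continuous_const.mul (continuous_pow 2)).continuousOn
      intro u hu
      rw [Set.uIcc_of_le hpq] at hu
      have hu0 : (0 : ℝ) < u := lt_of_lt_of_le hp hu.1
      show 2 * t * u ^ 2 ≠ 0
      positivity
    have hae : ∀ᵐ u ∂(volume.restrict (Set.uIoc p q)),
        ‖Complex.I * f u / (2 * t * (u : ℂ) ^ 2)‖ ≤ 1 / (2 * t * u ^ 2) := by
      apply MeasureTheory.ae_restrict_of_forall_mem measurableSet_uIoc
      intro u hu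
      rw [Set.uIoc_of_le hpq] at hu
      have hu0 : (0 : ℝ) < u := lt_trans hp hu.1
      rw [norm_div, norm_mul, Complex.norm_I, one_mul, hnormf u]
      rw [show (2 * (t:ℂ) * (u:ℂ)^2) = (((2 * t * u^2 : ℝ)) : ℂ) by push_cast; ring]
      rw [Complex.norm_real, Real.norm_of_nonneg (by positivity)]
    refine le_trans (intervalIntegral.norm_integral_le_abs_of_norm_le hae hii3) ?_
    rw [hcalc, _root_.abs_of_nonneg (by linarith)]
  have hq0 : (0:ℝ) < q := lt_of_lt_of_le hp hpq
  calc ‖∫ u in p..q, f u‖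
      ≤ (‖F q‖ + ‖F p‖) + (1 / (2 * t * p) - 1 / (2 * t * q)) := by
        rw [hsplit]
        refine le_trans (norm_sub_le _ _) (add_le_add (norm_sub_le _ _) hbound2)
    _ = 1 / (t * p) := by
        rw [hnormF q hq0, hnormF p hp]
        field_simp
        ring

private lemma fresnel_from_zero_nonneg (t q : ℝ) (ht : 0 < t) (hq : 0 ≤ q) :
    ‖∫ u in (0:ℝ)..q, Complex.exp (Complex.I * t * (u : ℂ) ^ 2)‖ ≤ 2 / Real.sqrt t := by
  set ε : ℝ := 1 / Real.sqrt t with hε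
  have hst : 0 < Real.sqrt t := Real.sqrt_pos.2 ht
  have hε0 : 0 < ε := by positivity
  have hts : t * ε = Real.sqrt t := by
    have hst : 0 < Real.sqrt t := Real.sqrt_pos.2 ht
    rw [hε]
    field_simp
    rw [Real.sq_sqrt ht.le]
  have htrivial : ∀ r s : ℝ, r ≤ s →
      ‖∫ u in r..s, Complex.exp (Complex.I * t * (u : ℂ) ^ 2)‖ ≤ s - r := by
    intro r s hrs
    have := intervalIntegral.norm_integral_le_of_norm_le_const
      (f := fun u : ℝ => Complex.exp (Complex.I * t * (u : ℂ) ^ 2)) (a := r) (b := s) (C := 1) ?_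
    · rwa [one_mul, _root_.abs_of_nonneg (by linarith : (0:ℝ) ≤ s - r)] at this
    · intro x _
      show ‖Complex.exp (Complex.I * t * (x : ℂ) ^ 2)‖ ≤ 1
      rw [show Complex.I * (t : ℂ) * (x : ℂ) ^ 2 = Complex.I * ((t * x ^ 2 : ℝ) : ℂ) by
        push_cast; ring, norm_exp_I_mul_real]
  rcases le_or_gt q ε with h | h
  · calc ‖∫ u in (0:ℝ)..q, Complex.exp (Complex.I * t * (u : ℂ) ^ 2)‖
        ≤ q - 0 := htrivial 0 q hq
      _ ≤ 2 / Real.sqrt t := by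
          rw [hε] at h; rw [sub_zero]
          calc q ≤ 1 / Real.sqrt t := h
            _ ≤ 2 / Real.sqrt t := by gcongr; norm_num
  · have hii1 : IntervalIntegrable (fun u : ℝ => Complex.exp (Complex.I * t * (u : ℂ) ^ 2))
        volume 0 ε := (cont_fres t).intervalIntegrable _ _
    have hii2 : IntervalIntegrable (fun u : ℝ => Complex.exp (Complex.I * t * (u : ℂ) ^ 2))
        volume ε q := (cont_fres t).intervalIntegrable _ _
    rw [← intervalIntegral.integral_add_adjacent_intervals hii1 hii2]
    calc ‖(∫ u in (0:ℝ)..ε, Complex.exp (Complex.I * t * (u : ℂ) ^ 2))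
          + ∫ u in ε..q, Complex.exp (Complex.I * t * (u : ℂ) ^ 2)‖
        ≤ (ε - 0) + 1 / (t * ε) :=
          norm_add_le_of_le (htrivial 0 ε hε0.le) (fresnel_ibp t ε q ht hε0 h.le)
      _ = 2 / Real.sqrt t := by rw [hts, sub_zero, hε]; ring

private lemma fresnel_from_zero (t q : ℝ) (ht : 0 < t) :
    ‖∫ u in (0:ℝ)..q, Complex.exp (Complex.I * t * (u : ℂ) ^ 2)‖ ≤ 2 / Real.sqrt t := by
  rcases le_or_gt 0 q with h | h
  · exact fresnel_from_zero_nonneg t q ht h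
  · set g : ℝ → ℂ := fun u : ℝ => Complex.exp (Complex.I * t * (u : ℂ) ^ 2) with hg
    have hev : ∀ u : ℝ, g (-u) = g u := by
      intro u
      show Complex.exp (Complex.I * t * ((-u : ℝ) : ℂ) ^ 2)
        = Complex.exp (Complex.I * t * (u : ℂ) ^ 2)
      congr 1
      push_cast
      ring
    have h1 : (∫ u in (0:ℝ)..(-q), g (-u)) = ∫ u in (q:ℝ)..(0:ℝ), g u := by
      rw [intervalIntegral.integral_comp_neg g, neg_neg, neg_zero]
    have h2 : (∫ u in (0:ℝ)..(-q), g (-u)) = ∫ u in (0:ℝ)..(-q), g u :=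
      intervalIntegral.integral_congr fun u _ => hev u
    have h3 : (∫ u in (0:ℝ)..q, g u) = -∫ u in (0:ℝ)..(-q), g u := by
      rw [← h2, h1, intervalIntegral.integral_symm]
    rw [h3, norm_neg]
    exact fresnel_from_zero_nonneg t (-q) ht (by linarith)

private lemma intervalIntegral_conj {f : ℝ → ℂ} {a b : ℝ} :
    (∫ x in a..b, (starRingEnd ℂ) (f x)) = (starRingEnd ℂ) (∫ x in a..b, f x) := by
  rw [intervalIntegral, intervalIntegral, map_sub, integral_conj, integral_conj]

private lemma fresnel_from_zero' (t q : ℝ) (ht : t ≠ 0) :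
    ‖∫ u in (0:ℝ)..q, Complex.exp (Complex.I * t * (u : ℂ) ^ 2)‖ ≤ 2 / Real.sqrt |t| := by
  rcases lt_or_gt_of_ne ht with h | h
  · have hconj : ∀ u : ℝ, Complex.exp (Complex.I * t * (u : ℂ) ^ 2)
        = (starRingEnd ℂ) (Complex.exp (Complex.I * (-t : ℝ) * (u : ℂ) ^ 2)) := by
      intro u
      rw [← Complex.exp_conj]
      congr 1
      simp only [map_mul, Complex.conj_I, map_pow, Complex.conj_ofReal]
      push_cast
      ring
    rw [show (∫ u in (0:ℝ)..q, Complex.exp (Complex.I * t * (u : ℂ) ^ 2))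
        = ∫ u in (0:ℝ)..q, (starRingEnd ℂ) (Complex.exp (Complex.I * (-t : ℝ) * (u : ℂ) ^ 2)) by
      apply intervalIntegral.integral_congr; intro u _; exact hconj u]
    rw [intervalIntegral_conj, RCLike.norm_conj]
    rw [abs_of_neg h]
    exact fresnel_from_zero (-t) q (by linarith)
  · rw [abs_of_pos h]
    exact fresnel_from_zero t q h

/-- Full-interval Fresnel bound. -/
private lemma fresnel_full (t A B : ℝ) (ht : t ≠ 0) :
    ‖∫ u in A..B, Complex.exp (Complex.I * t * (u : ℂ) ^ 2)‖ ≤ 4 / Real.sqrt |t| := by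
  have hii1 : IntervalIntegrable (fun u : ℝ => Complex.exp (Complex.I * t * (u : ℂ) ^ 2))
      volume A 0 := (cont_fres t).intervalIntegrable _ _
  have hii2 : IntervalIntegrable (fun u : ℝ => Complex.exp (Complex.I * t * (u : ℂ) ^ 2))
      volume 0 B := (cont_fres t).intervalIntegrable _ _
  rw [← intervalIntegral.integral_add_adjacent_intervals hii1 hii2]
  have h1 : ‖∫ u in A..(0:ℝ), Complex.exp (Complex.I * t * (u : ℂ) ^ 2)‖ ≤ 2 / Real.sqrt |t| := by
    rw [intervalIntegral.integral_symm, norm_neg]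
    exact fresnel_from_zero' t A ht
  have h2 := fresnel_from_zero' t B ht
  calc ‖(∫ u in A..(0:ℝ), Complex.exp (Complex.I * t * (u : ℂ) ^ 2))
        + ∫ u in (0:ℝ)..B, Complex.exp (Complex.I * t * (u : ℂ) ^ 2)‖
      ≤ 2 / Real.sqrt |t| + 2 / Real.sqrt |t| := norm_add_le_of_le h1 h2
    _ = 4 / Real.sqrt |t| := by ring

end Stmt3Aux

theorem stmt3 (a b : ℝ) (ha : a ≠ 0) (hb : b ≠ 0) :
    Tendsto (fun N : ℕ =>
        ‖∫ x in (-(1 : ℝ) / 2)..(1 / 2),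
            Complex.exp (Complex.I * ((a * N : ℝ) : ℂ) * (x : ℂ) *
              (1 + ((a / b * N : ℝ) : ℂ) * (x : ℂ)))‖)
      atTop (nhds 0) := by
  set K : ℝ := 4 / Real.sqrt (a ^ 2 / |b|) with hK
  have hK0 : 0 ≤ K := by positivity
  apply squeeze_zero' (g := fun N : ℕ => K / N)
  · filter_upwards with N; positivity
  · filter_upwards [Filter.eventually_ge_atTop 1] with N hN
    have hN0 : (0 : ℝ) < (N : ℝ) := by exact_mod_cast hN
    set cR : ℝ := a ^ 2 / b * (N : ℝ) ^ 2 with hcR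
    set dR : ℝ := b / (2 * a * (N : ℝ)) with hdR
    have hcne : cR ≠ 0 := by
      rw [hcR]; positivity
    have hkeyR : ∀ x : ℝ, (a * N) * x * (1 + (a / b * N) * x)
        = -(b / 4) + cR * (x + dR) ^ 2 := by
      intro x
      rw [hcR, hdR]
      field_simp
      ring
    have hkey : ∀ x : ℝ,
        Complex.I * ((a * N : ℝ) : ℂ) * (x : ℂ) * (1 + ((a / b * N : ℝ) : ℂ) * (x : ℂ))
        = Complex.I * ((-(b / 4) : ℝ) : ℂ)
          + Complex.I * (cR : ℂ) * (((x + dR : ℝ)) : ℂ) ^ 2 := by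
      intro x
      have h1 : Complex.I * ((a * N : ℝ) : ℂ) * (x : ℂ) * (1 + ((a / b * N : ℝ) : ℂ) * (x : ℂ))
          = Complex.I * (((a * N) * x * (1 + (a / b * N) * x) : ℝ) : ℂ) := by
        push_cast; ring
      rw [h1, hkeyR x]
      push_cast
      ring
    have hsplitexp :
        (∫ x in (-(1 : ℝ) / 2)..(1 / 2),
            Complex.exp (Complex.I * ((a * N : ℝ) : ℂ) * (x : ℂ) *
              (1 + ((a / b * N : ℝ) : ℂ) * (x : ℂ))))
        = Complex.exp (Complex.I * ((-(b / 4) : ℝ) : ℂ))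
          * ∫ x in (-(1 : ℝ) / 2)..(1 / 2),
              Complex.exp (Complex.I * (cR : ℂ) * (((x + dR : ℝ)) : ℂ) ^ 2) := by
      rw [← intervalIntegral.integral_const_mul]
      apply intervalIntegral.integral_congr
      intro x _
      show Complex.exp (Complex.I * ((a * N : ℝ) : ℂ) * (x : ℂ) *
              (1 + ((a / b * N : ℝ) : ℂ) * (x : ℂ)))
          = Complex.exp (Complex.I * ((-(b / 4) : ℝ) : ℂ))
            * Complex.exp (Complex.I * (cR : ℂ) * (((x + dR : ℝ)) : ℂ) ^ 2)
      rw [hkey x, Complex.exp_add]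
    have hshift :
        (∫ x in (-(1 : ℝ) / 2)..(1 / 2),
            Complex.exp (Complex.I * (cR : ℂ) * (((x + dR : ℝ)) : ℂ) ^ 2))
        = ∫ u in (-(1 : ℝ) / 2 + dR)..(1 / 2 + dR),
            Complex.exp (Complex.I * (cR : ℂ) * (u : ℂ) ^ 2) :=
      intervalIntegral.integral_comp_add_right
        (fun u : ℝ => Complex.exp (Complex.I * (cR : ℂ) * (u : ℂ) ^ 2)) dR
    rw [hsplitexp, hshift, norm_mul]
    rw [norm_exp_I_mul_real, one_mul]
    have hbnd := fresnel_full cR (-(1 : ℝ) / 2 + dR) (1 / 2 + dR) hcne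
    have habs : |cR| = a ^ 2 / |b| * (N : ℝ) ^ 2 := by
      rw [hcR, abs_mul, abs_div, abs_pow, abs_pow, sq_abs, abs_of_pos hN0]
    have hsqrt : Real.sqrt |cR| = Real.sqrt (a ^ 2 / |b|) * N := by
      rw [habs, Real.sqrt_mul (by positivity), Real.sqrt_sq hN0.le]
    calc ‖∫ u in (-(1 : ℝ) / 2 + dR)..(1 / 2 + dR),
            Complex.exp (Complex.I * (cR : ℂ) * (u : ℂ) ^ 2)‖
        ≤ 4 / Real.sqrt |cR| := hbnd
      _ = K / N := by
          rw [hsqrt, hK]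
          field_simp
  · have : Tendsto (fun N : ℕ => K / (N : ℝ)) atTop (nhds 0) :=
      tendsto_const_nhds.div_atTop tendsto_natCast_atTop_atTop
    exact this
end

section
/- Let c and e be real numbers with c ≠ 0. Then (1/A)·|∫_{−A/2}^{A/2} exp( 𝑖·(e·x + c·x²) ) dx| tends to 0 as the real number A tends to +∞. -/
open Filter intervalIntegral Complex

noncomputable def Fp (c e : ℝ) (x : ℝ) : ℂ :=
  Complex.exp (Complex.I * ((e * x + c * x ^ 2 : ℝ) : ℂ))

lemma Fp_cont (c e : ℝ) : Continuous (Fp c e) := by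
  unfold Fp; fun_prop

lemma Fp_norm (c e x : ℝ) : ‖Fp c e x‖ = 1 := by
  unfold Fp
  rw [mul_comm, Complex.norm_exp_ofReal_mul_I]

lemma Fp_deriv (c e : ℝ) (x : ℝ) :
    HasDerivAt (Fp c e) (Fp c e x * (Complex.I * ((e + 2*c*x : ℝ) : ℂ))) x := by
  have h1 : HasDerivAt (fun x : ℝ => (e * x + c * x ^ 2 : ℝ)) (e + 2*c*x) x := by
    have := ((hasDerivAt_id x).const_mul e).add ((hasDerivAt_pow 2 x).const_mul c)
    refine this.congr_deriv ?_
    norm_num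
    ring
  have h2 := (h1.ofReal_comp).const_mul Complex.I
  have h3 := h2.cexp
  unfold Fp
  convert h3 using 2



lemma alg (F D k : ℂ) (hD : D ≠ 0) :
    F + k*Complex.I*F/D^2 = (F * (Complex.I*D) * (Complex.I*D) - F*(Complex.I*k))/(Complex.I*D)^2 := by
  field_simp
  linear_combination (F*k) * Complex.I_sq

lemma bound_far (c e : ℝ) (hc : c ≠ 0) (s t : ℝ) (hs : -e/(2*c) + 1 ≤ s) (hst : s ≤ t) :
    ‖∫ x in s..t, Fp c e x‖ ≤ 3 / (2 * |c|) := by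
  set x₀ : ℝ := -e/(2*c) with hx₀
  have hc2 : (2:ℝ)*c ≠ 0 := mul_ne_zero two_ne_zero hc
  have habs : (0:ℝ) < 2*|c| := by positivity
  have h2 : 2*c*x₀ = -e := by rw [hx₀]; field_simp
  have hd : ∀ x : ℝ, e + 2*c*x = 2*c*(x - x₀) := by intro x; nlinarith [h2]
  have hge : ∀ x : ℝ, s ≤ x → 1 ≤ x - x₀ := by intro x hx; linarith
  have hdabs : ∀ x : ℝ, s ≤ x → |e + 2*c*x| = (2*|c|) * (x - x₀) := by
    intro x hx
    rw [hd x, abs_mul, abs_mul, _root_.abs_two,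
      _root_.abs_of_nonneg (by linarith [hge x hx] : (0:ℝ) ≤ x - x₀)]
  have hdge : ∀ x : ℝ, s ≤ x → 2*|c| ≤ |e + 2*c*x| := by
    intro x hx
    rw [hdabs x hx]
    nlinarith [hge x hx]
  have hdne : ∀ x : ℝ, s ≤ x → e + 2*c*x ≠ 0 := by
    intro x hx h
    have h' := hdge x hx
    rw [h, abs_zero] at h'
    linarith
  have hmem : ∀ x ∈ Set.uIcc s t, s ≤ x := by
    intro x hx
    rw [Set.uIcc_of_le hst] at hx
    exact hx.1
  set g : ℝ → ℂ := fun x => Fp c e x / (Complex.I * ((e + 2*c*x : ℝ) : ℂ)) with hg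
  set r : ℝ → ℂ := fun x =>
    ((2*c : ℝ) : ℂ) * Complex.I * Fp c e x / (((e + 2*c*x : ℝ) : ℂ))^2 with hr
  have hderiv : ∀ x ∈ Set.uIcc s t, HasDerivAt g (Fp c e x + r x) x := by
    intro x hx
    have hxs := hmem x hx
    have hne' : ((e + 2*c*x : ℝ) : ℂ) ≠ 0 := Complex.ofReal_ne_zero.mpr (hdne x hxs)
    have hdenne : (Complex.I * ((e + 2*c*x : ℝ) : ℂ)) ≠ 0 :=
      mul_ne_zero Complex.I_ne_zero hne'
    have hden : HasDerivAt (fun x : ℝ => Complex.I * ((e + 2*c*x : ℝ) : ℂ))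
        (Complex.I * ((2*c : ℝ) : ℂ)) x := by
      have : HasDerivAt (fun x : ℝ => e + 2*c*x) (2*c) x := by
        simpa using ((hasDerivAt_id x).const_mul (2*c)).const_add e
      exact this.ofReal_comp.const_mul Complex.I
    have hdiv := (Fp_deriv c e x).div hden hdenne
    refine hdiv.congr_deriv ?_
    symm
    rw [hr]
    calc Fp c e x + ((2*c : ℝ) : ℂ) * Complex.I * Fp c e x / (((e + 2*c*x : ℝ) : ℂ))^2
        = (Fp c e x * (Complex.I * ((e + 2*c*x : ℝ) : ℂ)) * (Complex.I * ((e + 2*c*x : ℝ) : ℂ))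
            - Fp c e x * (Complex.I * ((2*c : ℝ) : ℂ))) / (Complex.I * ((e + 2*c*x : ℝ) : ℂ))^2 :=
          alg _ _ _ hne'
      _ = _ := by ring
  have hFint : IntervalIntegrable (Fp c e) MeasureTheory.volume s t :=
    (Fp_cont c e).intervalIntegrable s t
  have hrcont : ContinuousOn r (Set.uIcc s t) := by
    apply ContinuousOn.div
    · exact (continuous_const.mul (Fp_cont c e)).continuousOn
    · fun_prop
    · intro x hx
      exact pow_ne_zero _ (Complex.ofReal_ne_zero.mpr (hdne x (hmem x hx)))
  have hrint : IntervalIntegrable r MeasureTheory.volume s t :=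
    hrcont.intervalIntegrable
  have hFTC : ∫ x in s..t, (Fp c e x + r x) = g t - g s :=
    integral_eq_sub_of_hasDerivAt hderiv (hFint.add hrint)
  rw [integral_add hFint hrint] at hFTC
  have heq : ∫ x in s..t, Fp c e x = g t - g s - ∫ x in s..t, r x :=
    eq_sub_of_add_eq hFTC
  have hgnorm : ∀ x : ℝ, s ≤ x → ‖g x‖ ≤ 1/(2*|c|) := by
    intro x hx
    rw [hg]
    simp only [norm_div, norm_mul, Complex.norm_I, Complex.norm_real, one_mul,
      Fp_norm, Real.norm_eq_abs]
    rw [div_le_div_iff₀ (lt_of_lt_of_le habs (hdge x hx)) habs]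
    nlinarith [hdge x hx]
  have hbcont : ContinuousOn (fun x : ℝ => ((x - x₀)^2)⁻¹) (Set.uIcc s t) := by
    apply ContinuousOn.inv₀
    · fun_prop
    · intro x hx
      exact pow_ne_zero _ (by nlinarith [hge x (hmem x hx)])
  have hbint : IntervalIntegrable (fun x : ℝ => (2*|c|)⁻¹ * ((x - x₀)^2)⁻¹)
      MeasureTheory.volume s t := (hbcont.const_smul ((2*|c|)⁻¹ : ℝ)).intervalIntegrable
  have hcompute : ∫ x in s..t, ((x - x₀)^2)⁻¹ = (s - x₀)⁻¹ - (t - x₀)⁻¹ := by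
    have hH : ∀ x ∈ Set.uIcc s t, HasDerivAt (fun x : ℝ => -(x - x₀)⁻¹) (((x - x₀)^2)⁻¹) x := by
      intro x hx
      have hne : x - x₀ ≠ 0 := by nlinarith [hge x (hmem x hx)]
      have := (((hasDerivAt_id x).sub_const x₀).inv hne).neg
      refine this.congr_deriv ?_
      field_simp
      simp only [id_eq]
      exact div_self (pow_ne_zero _ hne)
    rw [integral_eq_sub_of_hasDerivAt hH hbcont.intervalIntegrable]
    ring
  have hintval : ∫ x in s..t, (2*|c|)⁻¹ * ((x - x₀)^2)⁻¹
      = (2*|c|)⁻¹ * ((s - x₀)⁻¹ - (t - x₀)⁻¹) := by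
    rw [intervalIntegral.integral_const_mul, hcompute]
  have h1s : 1 ≤ s - x₀ := hge s le_rfl
  have h1t : 1 ≤ t - x₀ := hge t hst
  have hnn : (0:ℝ) ≤ (s - x₀)⁻¹ - (t - x₀)⁻¹ := by
    have : (t - x₀)⁻¹ ≤ (s - x₀)⁻¹ := by
      apply inv_anti₀ (by linarith) (by linarith)
    linarith
  have hsi : (s - x₀)⁻¹ ≤ 1 := by
    rw [inv_le_one_iff₀]; right; exact h1s
  have hti : (0:ℝ) ≤ (t - x₀)⁻¹ := by positivity
  have hrle : ‖∫ x in s..t, r x‖ ≤ (2*|c|)⁻¹ := by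
    have hae : ∀ᵐ x ∂MeasureTheory.volume.restrict (Set.uIoc s t),
        ‖r x‖ ≤ (2*|c|)⁻¹ * ((x - x₀)^2)⁻¹ := by
      rw [MeasureTheory.ae_restrict_iff' measurableSet_uIoc]
      apply Filter.Eventually.of_forall
      intro x hx
      rw [Set.uIoc_of_le hst] at hx
      have hxs : s ≤ x := le_of_lt hx.1
      rw [hr]
      simp only [norm_div, norm_mul, Complex.norm_I, Complex.norm_real, norm_pow,
        Fp_norm, Real.norm_eq_abs, mul_one, one_mul]
      rw [hdabs x hxs]
      have h1 : 1 ≤ x - x₀ := hge x hxs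
      have hy0 : x - x₀ ≠ 0 := by nlinarith
      have hceq : |(2:ℝ)| * |c| / (2 * |c| * (x - x₀)) ^ 2 = (2*|c|)⁻¹ * ((x - x₀)^2)⁻¹ := by
        rw [_root_.abs_two]
        field_simp [abs_ne_zero.mpr hc, hy0]
      exact le_of_eq hceq
    have h := intervalIntegral.norm_integral_le_abs_of_norm_le hae hbint
    rw [hintval] at h
    apply h.trans
    rw [_root_.abs_of_nonneg (mul_nonneg (by positivity) hnn)]
    nlinarith [inv_pos.mpr habs]
  rw [heq]
  calc ‖g t - g s - ∫ x in s..t, r x‖ ≤ ‖g t - g s‖ + ‖∫ x in s..t, r x‖ := norm_sub_le _ _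
    _ ≤ ‖g t‖ + ‖g s‖ + ‖∫ x in s..t, r x‖ := by linarith [norm_sub_le (g t) (g s)]
    _ ≤ 1/(2*|c|) + 1/(2*|c|) + (2*|c|)⁻¹ :=
        add_le_add (add_le_add (hgnorm t hst) (hgnorm s le_rfl)) hrle
    _ = 3/(2*|c|) := by field_simp; ring

lemma bound_right (c e : ℝ) (hc : c ≠ 0) (b : ℝ) (hb : -e/(2*c) ≤ b) :
    ‖∫ x in (-e/(2*c))..b, Fp c e x‖ ≤ 1 + 3/(2*|c|) := by
  set x₀ : ℝ := -e/(2*c) with hx₀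
  by_cases h : b ≤ x₀ + 1
  · have h1 := intervalIntegral.norm_integral_le_of_norm_le_const
      (C := 1) (f := Fp c e) (a := x₀) (b := b) (fun x _ => le_of_eq (Fp_norm c e x))
    have : |b - x₀| ≤ 1 := by rw [_root_.abs_of_nonneg (by linarith)]; linarith
    have h3 : (0:ℝ) ≤ 3/(2*|c|) := by positivity
    calc ‖∫ x in x₀..b, Fp c e x‖ ≤ 1 * |b - x₀| := h1
      _ ≤ 1 := by rw [one_mul]; exact this
      _ ≤ 1 + 3/(2*|c|) := by linarith
  · push_neg at h
    have hint1 : IntervalIntegrable (Fp c e) MeasureTheory.volume x₀ (x₀+1) :=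
      (Fp_cont c e).intervalIntegrable _ _
    have hint2 : IntervalIntegrable (Fp c e) MeasureTheory.volume (x₀+1) b :=
      (Fp_cont c e).intervalIntegrable _ _
    rw [← intervalIntegral.integral_add_adjacent_intervals hint1 hint2]
    have h1 := intervalIntegral.norm_integral_le_of_norm_le_const
      (C := 1) (f := Fp c e) (a := x₀) (b := x₀+1) (fun x _ => le_of_eq (Fp_norm c e x))
    have h2 := bound_far c e hc (x₀+1) b le_rfl (le_of_lt h)
    calc ‖(∫ x in x₀..(x₀+1), Fp c e x) + ∫ x in (x₀+1)..b, Fp c e x‖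
        ≤ ‖∫ x in x₀..(x₀+1), Fp c e x‖ + ‖∫ x in (x₀+1)..b, Fp c e x‖ := norm_add_le _ _
      _ ≤ 1 + 3/(2*|c|) := by
          apply add_le_add _ h2
          simpa using h1

lemma bound_any (c e : ℝ) (hc : c ≠ 0) (b : ℝ) :
    ‖∫ x in (-e/(2*c))..b, Fp c e x‖ ≤ 1 + 3/(2*|c|) := by
  rcases le_total (-e/(2*c)) b with h | h
  · exact bound_right c e hc b h
  · have hrefl : (∫ x in (-e/(2*c))..b, Fp c e x) = ∫ x in (-e/(2*c))..b, Fp c (-e) (-x) := by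
      apply intervalIntegral.integral_congr
      intro x _
      unfold Fp
      norm_num
    rw [hrefl, intervalIntegral.integral_comp_neg (fun x => Fp c (-e) x)]
    rw [intervalIntegral.integral_symm]
    rw [norm_neg]
    have hx₀ : -(-e/(2*c)) = -(-e)/(2*c) := by ring
    rw [hx₀]
    exact bound_right c (-e) hc (-b) (by rw [← hx₀]; linarith)

lemma bound_sym (c e : ℝ) (hc : c ≠ 0) (u v : ℝ) :
    ‖∫ x in u..v, Fp c e x‖ ≤ 2 * (1 + 3/(2*|c|)) := by
  have hint1 : IntervalIntegrable (Fp c e) MeasureTheory.volume u (-e/(2*c)) :=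
    (Fp_cont c e).intervalIntegrable _ _
  have hint2 : IntervalIntegrable (Fp c e) MeasureTheory.volume (-e/(2*c)) v :=
    (Fp_cont c e).intervalIntegrable _ _
  rw [← intervalIntegral.integral_add_adjacent_intervals hint1 hint2]
  have h1 : ‖∫ x in u..(-e/(2*c)), Fp c e x‖ ≤ 1 + 3/(2*|c|) := by
    rw [intervalIntegral.integral_symm, norm_neg]
    exact bound_any c e hc u
  have h2 := bound_any c e hc v
  calc ‖(∫ x in u..(-e/(2*c)), Fp c e x) + ∫ x in (-e/(2*c))..v, Fp c e x‖
      ≤ ‖∫ x in u..(-e/(2*c)), Fp c e x‖ + ‖∫ x in (-e/(2*c))..v, Fp c e x‖ := norm_add_le _ _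
    _ ≤ 2 * (1 + 3/(2*|c|)) := by linarith

theorem stmt4 (c e : ℝ) (hc : c ≠ 0) :
    Tendsto (fun A : ℝ =>
        (1 / A) * ‖∫ x in (-A / 2)..(A / 2),
            Complex.exp (Complex.I * ((e * x + c * x ^ 2 : ℝ) : ℂ))‖)
      atTop (nhds 0) := by
  set C : ℝ := 2 * (1 + 3/(2*|c|)) with hC
  have hC0 : 0 ≤ C := by positivity
  apply squeeze_zero' (g := fun A : ℝ => C * A⁻¹)
  · filter_upwards [eventually_gt_atTop (0:ℝ)] with A hA
    positivity
  · filter_upwards [eventually_gt_atTop (0:ℝ)] with A hA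
    have hb := bound_sym c e hc (-A/2) (A/2)
    have : (∫ x in (-A/2)..(A/2), Complex.exp (Complex.I * ((e * x + c * x ^ 2 : ℝ) : ℂ)))
        = ∫ x in (-A/2)..(A/2), Fp c e x := rfl
    rw [this, one_div, mul_comm]
    exact mul_le_mul_of_nonneg_right hb (by positivity)
  · have := tendsto_inv_atTop_zero (𝕜 := ℝ)
    have h := this.const_mul C
    simpa using h
end

section
/- Let K be a natural number, P > 0 a real, N : Fin K → ℝ with 0 < N_0 and N_0 ≤ N_k for all k, and α : Fin K → ℝ with α_k ≥ 0 and ∑_k α_k = 1. Then ∑_{k=0}^{K−1} log₂( 1 + α_k·P / (N_k + ∑_{k'<k} α_{k'}·P) ) ≤ log₂( 1 + P/N_0 ), with equality when α_0 = 1 and α_k = 0 for all k ≠ 0. -/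
open Finset

theorem stmt13 (K : ℕ) (hK : 0 < K) (P : ℝ) (hP : 0 < P) (N : Fin K → ℝ)
    (hN0 : 0 < N ⟨0, hK⟩) (hNle : ∀ k, N ⟨0, hK⟩ ≤ N k) :
    (∀ α : Fin K → ℝ, (∀ k, 0 ≤ α k) → (∑ k : Fin K, α k) = 1 →
      (∑ k : Fin K,
          Real.logb 2 (1 + α k * P /
            (N k + (∑ k' ∈ Finset.univ.filter (fun k' => k' < k), α k') * P)))
        ≤ Real.logb 2 (1 + P / N ⟨0, hK⟩)) ∧
    (∑ k : Fin K,
        Real.logb 2 (1 + (if k = ⟨0, hK⟩ then (1 : ℝ) else 0) * P /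
          (N k + (∑ k' ∈ Finset.univ.filter (fun k' => k' < k),
            if k' = ⟨0, hK⟩ then (1 : ℝ) else 0) * P)))
      = Real.logb 2 (1 + P / N ⟨0, hK⟩) := by
  have hfinal : Real.logb 2 (N ⟨0, hK⟩ + P) - Real.logb 2 (N ⟨0, hK⟩)
      = Real.logb 2 (1 + P / N ⟨0, hK⟩) := by
    rw [← Real.logb_div (by positivity) (ne_of_gt hN0)]
    congr 1
    field_simp
  constructor
  · intro α hα hsum
    set α' : ℕ → ℝ := fun i => if h : i < K then α ⟨i, h⟩ else 0 with hα'
    set σ : ℕ → ℝ := fun n => ∑ i ∈ Finset.range n, α' i with hσ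
    have hα'nonneg : ∀ i, 0 ≤ α' i := by
      intro i; simp only [hα']; split
      · exact hα _
      · exact le_rfl
    have hσnonneg : ∀ n, 0 ≤ σ n := fun n => Finset.sum_nonneg fun i _ => hα'nonneg i
    have hσsucc : ∀ n, σ (n + 1) = σ n + α' n := fun n => Finset.sum_range_succ _ n
    have hσK : σ K = 1 := by
      rw [← hsum]
      show (∑ i ∈ Finset.range K, α' i) = ∑ k : Fin K, α k
      rw [← Fin.sum_univ_eq_sum_range α' K]
      exact Finset.sum_congr rfl fun k _ => by simp [hα', k.isLt]
    have hfilt : ∀ k : Fin K,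
        (∑ k' ∈ Finset.univ.filter (fun k' => k' < k), α k') = σ k.val := by
      intro k
      rw [hσ]
      refine Finset.sum_nbij' (fun (k' : Fin K) => (k' : ℕ))
        (fun i => if h : i < K then (⟨i, h⟩ : Fin K) else ⟨0, hK⟩) ?_ ?_ ?_ ?_ ?_
      · intro a ha
        simp only [mem_filter, mem_univ, true_and, Fin.lt_def] at ha
        simpa using ha
      · intro a ha
        simp only [mem_range] at ha
        have hA : a < K := lt_trans ha k.isLt
        simp only [mem_filter, mem_univ, true_and, hA, dif_pos]
        exact Fin.lt_def.mpr ha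
      · intro a _; simp [a.isLt]
      · intro a ha
        simp only [mem_range] at ha
        simp [lt_trans ha k.isLt]
      · intro a _
        simp [hα', a.isLt]
    set f : ℕ → ℝ := fun n => Real.logb 2 (N ⟨0, hK⟩ + σ n * P) with hf
    have hterm : ∀ k : Fin K,
        Real.logb 2 (1 + α k * P /
            (N k + (∑ k' ∈ Finset.univ.filter (fun k' => k' < k), α k') * P))
          ≤ f (k.val + 1) - f k.val := by
      intro k
      rw [hfilt k, hf]
      have ha : (0:ℝ) ≤ σ k.val := hσnonneg _
      have hb : σ (k.val + 1) = σ k.val + α k := by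
        rw [hσsucc]; simp [hα', k.isLt]
      have hNk : 0 < N k := lt_of_lt_of_le hN0 (hNle k)
      have hd1 : 0 < N k + σ k.val * P := by positivity
      have hd0 : 0 < N ⟨0, hK⟩ + σ k.val * P := by positivity
      have hd0' : 0 < N ⟨0, hK⟩ + σ (k.val + 1) * P := by
        have := hσnonneg (k.val + 1); positivity
      have hd1' : 0 < N k + σ (k.val + 1) * P := by
        have := hσnonneg (k.val + 1); positivity
      have h1 : 1 + α k * P / (N k + σ k.val * P)
          = (N k + σ (k.val + 1) * P) / (N k + σ k.val * P) := by
        rw [hb]; field_simp; ring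
      rw [h1, ← Real.logb_div (ne_of_gt hd0') (ne_of_gt hd0)]
      rw [Real.logb_le_logb one_lt_two (by positivity) (by positivity)]
      rw [div_le_div_iff₀ hd1 hd0]
      have hab : σ k.val ≤ σ (k.val + 1) := by rw [hb]; linarith [hα k]
      nlinarith [mul_nonneg (mul_nonneg (sub_nonneg.mpr hab) hP.le) (sub_nonneg.mpr (hNle k))]
    calc (∑ k : Fin K, Real.logb 2 (1 + α k * P /
            (N k + (∑ k' ∈ Finset.univ.filter (fun k' => k' < k), α k') * P)))
        ≤ ∑ k : Fin K, (f (k.val + 1) - f k.val) :=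
          Finset.sum_le_sum fun k _ => hterm k
      _ = ∑ i ∈ Finset.range K, (f (i + 1) - f i) :=
          Fin.sum_univ_eq_sum_range (fun i => f (i + 1) - f i) K
      _ = f K - f 0 := Finset.sum_range_sub f K
      _ = Real.logb 2 (1 + P / N ⟨0, hK⟩) := by
          rw [hf]
          simp only [hσK]
          have h0 : σ 0 = 0 := by simp [hσ]
          rw [h0, one_mul, zero_mul, add_zero]
          exact hfinal
  · rw [Finset.sum_eq_single (⟨0, hK⟩ : Fin K)]
    · have : (Finset.univ.filter (fun k' => k' < (⟨0, hK⟩ : Fin K))) = ∅ := by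
        ext k'; simp [Fin.lt_def]
      simp [this]
    · intro k _ hk
      simp [hk]
    · simp
end
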